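/- arXiv:1310.3888 — 4 statements merged into one kernel-verified Lean document; each statement's English description precedes it below -/
import Mathlib

section
/- Let Φ be a homogeneous cd-polynomial of degree k with non-negative integer coefficients, and write Φ(1+b, 2b) = γ_0 + γ_1 b + ⋯ + γ_k b^k (substituting c ↦ 1+b, d ↦ 2b, where now b is a single commuting variable). Then the sequence (γ_0, ..., γ_k) is symmetric (γ_i = γ_{k−i}) and unimodal. -/
open Polynomial

/-- The degree of a cd-word (a word in the letters `c`, `d`, encoded as a list of
Booleans where `false` = `c` of degree 1 and `true` = `d` of degree 2). -/
def cdDeg (w : List Bool) : ℕ := (w.map (fun t => if t then 2 else 1)).sum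

/-- Evaluation of a cd-word under the substitution `c ↦ 1 + b`, `d ↦ 2b`
(with `b` a single commuting variable). -/
noncomputable def cdEval (w : List Bool) : Polynomial ℕ :=
  (w.map (fun t => if t then 2 * X else 1 + X)).prod

private lemma choose_mono_half {m a b : ℕ} (hab : a ≤ b) (hb : 2 * b ≤ m) :
    Nat.choose m a ≤ Nat.choose m b := by
  induction hab with
  | refl => exact le_rfl
  | @step b' h ih =>
      exact (ih (by omega)).trans
        (Nat.choose_le_succ_of_lt_half_left (by omega))

private lemma cdEval_eq (w : List Bool) :
    cdEval w = ((2 ^ (w.count true) : ℕ) : Polynomial ℕ) *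
      (X ^ (w.count true) * (1 + X) ^ (w.count false)) := by
  induction w with
  | nil => simp [cdEval]
  | cons t w ih =>
      cases t <;>
      · simp only [cdEval, List.map_cons, List.prod_cons] at ih ⊢
        rw [ih]
        simp [List.count_cons, pow_succ]
        push_cast
        ring

private lemma cdDeg_eq (w : List Bool) :
    cdDeg w = 2 * w.count true + w.count false := by
  induction w with
  | nil => simp [cdDeg]
  | cons t w ih =>
      cases t <;> simp [cdDeg, List.count_cons] at * <;> omega

private lemma cdEval_coeff (w : List Bool) (i : ℕ) :
    (cdEval w).coeff i =
      if w.count true ≤ i then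
        2 ^ (w.count true) * Nat.choose (w.count false) (i - w.count true)
      else 0 := by
  rw [cdEval_eq, coeff_natCast_mul, mul_comm (X ^ (w.count true)),
    coeff_mul_X_pow', coeff_one_add_X_pow]
  split <;> simp

private lemma cdEval_coeff_symm {w : List Bool} {k i : ℕ} (hk : cdDeg w = k)
    (hik : i ≤ k) : (cdEval w).coeff i = (cdEval w).coeff (k - i) := by
  rw [cdDeg_eq] at hk
  set j := w.count true
  set c := w.count false
  rw [cdEval_coeff, cdEval_coeff]
  by_cases h1 : j ≤ i
  · by_cases h2 : i - j ≤ c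
    · rw [if_pos h1, if_pos (by omega)]
      congr 1
      rw [show k - i - j = c - (i - j) by omega, Nat.choose_symm h2]
    · rw [if_pos h1, if_neg (by omega), Nat.choose_eq_zero_of_lt (by omega),
        mul_zero]
  · rw [if_neg h1, if_pos (by omega), Nat.choose_eq_zero_of_lt (by omega),
      mul_zero]

private lemma cdEval_coeff_mono {w : List Bool} {k i i' : ℕ} (hk : cdDeg w = k)
    (hii : i ≤ i') (hi' : 2 * i' ≤ k) :
    (cdEval w).coeff i ≤ (cdEval w).coeff i' := by
  rw [cdDeg_eq] at hk
  set j := w.count true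
  set c := w.count false
  rw [cdEval_coeff, cdEval_coeff]
  by_cases h1 : j ≤ i
  · rw [if_pos h1, if_pos (by omega)]
    exact Nat.mul_le_mul_left _ (choose_mono_half (by omega) (by omega))
  · rw [if_neg h1]
    exact Nat.zero_le _

/-- Let `Φ` be a homogeneous cd-polynomial of degree `k` with
non-negative coefficients (given by a finite set `W` of cd-words of degree `k`
and coefficients `α w ∈ ℕ`), and write `Φ(1+b, 2b) = γ_0 + γ_1 b + ⋯ + γ_k b^k`.
Then the sequence `(γ_0, …, γ_k)` is symmetric and unimodal. -/
theorem cd_substitution_symmetric_unimodal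
    (k : ℕ) (W : Finset (List Bool)) (α : List Bool → ℕ)
    (hW : ∀ w ∈ W, cdDeg w = k)
    (γ : ℕ → ℕ)
    (hγ : ∀ i, γ i = (∑ w ∈ W, α w • cdEval w).coeff i) :
    (∀ i ≤ k, γ i = γ (k - i)) ∧
    ∃ p ≤ k, (∀ i j, i ≤ j → j ≤ p → γ i ≤ γ j) ∧
      (∀ i j, p ≤ i → i ≤ j → j ≤ k → γ j ≤ γ i) := by
  have hγ' : ∀ i, γ i = ∑ w ∈ W, α w * (cdEval w).coeff i := by
    intro i
    rw [hγ, finset_sum_coeff]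
    exact Finset.sum_congr rfl fun w _ => by rw [coeff_smul, smul_eq_mul]
  have hsym : ∀ i ≤ k, γ i = γ (k - i) := by
    intro i hik
    rw [hγ', hγ']
    exact Finset.sum_congr rfl fun w hw => by
      rw [cdEval_coeff_symm (hW w hw) hik]
  have hmono : ∀ i j, i ≤ j → 2 * j ≤ k → γ i ≤ γ j := by
    intro i j hij hj
    rw [hγ', hγ']
    exact Finset.sum_le_sum fun w hw =>
      Nat.mul_le_mul_left _ (cdEval_coeff_mono (hW w hw) hij hj)
  refine ⟨hsym, k / 2, Nat.div_le_self _ _, fun i j hij hjp =>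
    hmono i j hij (by omega), fun i j hpi hij hjk => ?_⟩
  rcases eq_or_lt_of_le hij with rfl | hlt
  · exact le_rfl
  · rw [hsym j hjk]
    by_cases hi : 2 * i ≤ k
    · exact hmono (k - j) i (by omega) hi
    · rw [hsym i (by omega)]
      exact hmono (k - j) (k - i) (by omega) (by omega)
end

section
/- Let P be a finite poset of rank n and suppose the ab-index Ψ_P(a,b) = Σ_{S⊆[n]} h_S(P) w_S can be written as Φ^d·d + Φ^a·a + Φ^b·b with cd-polynomials Φ^d, Φ^a, Φ^b having non-negative coefficients. Then the h-vector (h_0, ..., h_n) of Δ_P defined by h_i = Σ_{|S|=i} h_S(P) is unimodal. -/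
open Classical

/-- The variable `a` of the non-commutative polynomial ring `ℤ⟨a,b⟩`. -/
noncomputable def abA : FreeAlgebra ℤ (Fin 2) := FreeAlgebra.ι ℤ 0

/-- The variable `b` of the non-commutative polynomial ring `ℤ⟨a,b⟩`. -/
noncomputable def abB : FreeAlgebra ℤ (Fin 2) := FreeAlgebra.ι ℤ 1

/-- cd-monomials (words in `c = a+b` and `d = ab+ba`), as elements of `ℤ⟨a,b⟩`. -/
def cdMonomials : Set (FreeAlgebra ℤ (Fin 2)) :=
  {x | ∃ w : List Bool,
    x = (w.map (fun t => if t then abA * abB + abB * abA else abA + abB)).prod}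

/-- The characteristic ab-monomial `w_S` of `S ⊆ [n]`. -/
noncomputable def wMon (n : ℕ) (S : Finset ℕ) : FreeAlgebra ℤ (Fin 2) :=
  (List.ofFn (fun i : Fin n => if (i : ℕ) + 1 ∈ S then abB else abA)).prod

/-!
Let `a` and `b` commute. A cd-monomial becomes `(a + b)ᵏ (2ab)ˡ`, whose coefficients along each
antidiagonal `aⁱbʲ, i + j = m`, are non-negative, symmetric and increase towards the middle; this
is preserved under multiplication by `a + b` (Pascal's rule) and by `2ab`. Multiplying such a
polynomial by `a` or `b` breaks the symmetry, but its coefficients still increase towards the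
middle of every antidiagonal, and this weaker property is closed under sums. The `h`-vector is the
antidiagonal `i + j = n` of the commutative image of `Ψ_P`.
-/

open MvPolynomial

noncomputable def abelianize : FreeAlgebra ℤ (Fin 2) →ₐ[ℤ] MvPolynomial (Fin 2) ℤ :=
  FreeAlgebra.lift ℤ X

@[simp]
theorem abelianize_abA : abelianize abA = X 0 := FreeAlgebra.lift_ι_apply _ _

@[simp]
theorem abelianize_abB : abelianize abB = X 1 := FreeAlgebra.lift_ι_apply _ _

noncomputable def abCoeff : MvPolynomial (Fin 2) ℤ →+ (ℕ → ℕ → ℤ) where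
  toFun p i j := coeff (Finsupp.single 0 i + Finsupp.single 1 j) p
  map_zero' := by ext; simp
  map_add' p q := by ext; simp

theorem abCoeff_apply (p : MvPolynomial (Fin 2) ℤ) (i j : ℕ) :
    abCoeff p i j = coeff (Finsupp.single 0 i + Finsupp.single 1 j) p := rfl

theorem single_add_single_inj {i j k l : ℕ} :
    Finsupp.single (0 : Fin 2) i + Finsupp.single 1 j = Finsupp.single 0 k + Finsupp.single 1 l ↔
      i = k ∧ j = l := by
  refine ⟨fun h => ⟨?_, ?_⟩, fun ⟨hi, hj⟩ => hi ▸ hj ▸ rfl⟩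
  · simpa using DFunLike.congr_fun h 0
  · simpa using DFunLike.congr_fun h 1

theorem abCoeff_X_pow_mul_X_pow (m k i j : ℕ) :
    abCoeff (X 0 ^ m * X 1 ^ k) i j = if m = i ∧ k = j then 1 else 0 := by
  rw [abCoeff_apply, X_pow_eq_monomial, X_pow_eq_monomial, monomial_mul, one_mul, coeff_monomial]
  exact if_congr single_add_single_inj rfl rfl

theorem abCoeff_one (i j : ℕ) : abCoeff 1 i j = if i = 0 ∧ j = 0 then 1 else 0 := by
  simpa [eq_comm] using abCoeff_X_pow_mul_X_pow 0 0 i j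

@[simp]
theorem abCoeff_mul_X_zero_succ (p : MvPolynomial (Fin 2) ℤ) (i j : ℕ) :
    abCoeff (p * X 0) (i + 1) j = abCoeff p i j := by
  rw [abCoeff_apply, abCoeff_apply, ← coeff_mul_X _ 0 p, Finsupp.single_add, add_right_comm]

@[simp]
theorem abCoeff_mul_X_zero_zero (p : MvPolynomial (Fin 2) ℤ) (j : ℕ) :
    abCoeff (p * X 0) 0 j = 0 := by
  rw [abCoeff_apply, coeff_mul_X', if_neg]
  simp

@[simp]
theorem abCoeff_mul_X_one_succ (p : MvPolynomial (Fin 2) ℤ) (i j : ℕ) :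
    abCoeff (p * X 1) i (j + 1) = abCoeff p i j := by
  rw [abCoeff_apply, abCoeff_apply, ← coeff_mul_X _ 1 p, Finsupp.single_add, add_assoc]

@[simp]
theorem abCoeff_mul_X_one_zero (p : MvPolynomial (Fin 2) ℤ) (i : ℕ) :
    abCoeff (p * X 1) i 0 = 0 := by
  rw [abCoeff_apply, coeff_mul_X', if_neg]
  simp

/-- `F` can only grow when `(i, j)` moves to a point `(k, l)` of its antidiagonal that lies
between it and the diagonal. -/
def unimodalOnAntidiagonals : AddSubmonoid (ℕ → ℕ → ℤ) where
  carrier := {F | ∀ i j k l, i + j = k + l → (j ≤ l ∧ l ≤ k ∨ i ≤ k ∧ k ≤ l) → F i j ≤ F k l}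
  add_mem' hF hG i j k l hs hm := add_le_add (hF i j k l hs hm) (hG i j k l hs hm)
  zero_mem' _ _ _ _ _ _ := le_rfl

theorem swap_mem_unimodalOnAntidiagonals {F : ℕ → ℕ → ℤ} (hF : F ∈ unimodalOnAntidiagonals) :
    (fun i j => F j i) ∈ unimodalOnAntidiagonals :=
  fun i j k l hs hm => hF j i l k (by omega) hm.symm

structure IsSymmUnimodal (p : MvPolynomial (Fin 2) ℤ) : Prop where
  nonneg : ∀ i j, 0 ≤ abCoeff p i j
  symm : ∀ i j, abCoeff p i j = abCoeff p j i
  -- strict, so that each of the two shifted copies in `p * (a + b)` can be compared separately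
  le_of_min_lt : ∀ {i j k l}, i + j = k + l → min i j < min k l → abCoeff p i j ≤ abCoeff p k l

theorem isSymmUnimodal_one : IsSymmUnimodal 1 where
  nonneg i j := by rw [abCoeff_one]; split <;> norm_num
  symm i j := by simp only [abCoeff_one, and_comm]
  le_of_min_lt {i j k l} hs hm := by
    rw [abCoeff_one, abCoeff_one, if_neg (by omega)]
    split <;> norm_num

namespace IsSymmUnimodal

variable {p q : MvPolynomial (Fin 2) ℤ}

theorem le_of_min_le (hp : IsSymmUnimodal p) {i j k l : ℕ} (hs : i + j = k + l)
    (hm : min i j ≤ min k l) : abCoeff p i j ≤ abCoeff p k l := by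
  rcases hm.lt_or_eq with hm | hm
  · exact hp.le_of_min_lt hs hm
  · rcases (show i = k ∧ j = l ∨ i = l ∧ j = k by omega) with ⟨rfl, rfl⟩ | ⟨rfl, rfl⟩
    · exact le_rfl
    · exact (hp.symm i j).le

theorem add (hp : IsSymmUnimodal p) (hq : IsSymmUnimodal q) : IsSymmUnimodal (p + q) where
  nonneg i j := add_nonneg (hp.nonneg i j) (hq.nonneg i j)
  symm i j := congrArg₂ (· + ·) (hp.symm i j) (hq.symm i j)
  le_of_min_lt hs hm := add_le_add (hp.le_of_min_lt hs hm) (hq.le_of_min_lt hs hm)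

theorem abCoeff_mul_X_zero_nonneg (hp : IsSymmUnimodal p) (i j : ℕ) :
    0 ≤ abCoeff (p * X 0) i j := by
  cases i <;> simp [hp.nonneg]

theorem abCoeff_mul_X_one_eq (hp : IsSymmUnimodal p) (i j : ℕ) :
    abCoeff (p * X 1) i j = abCoeff (p * X 0) j i := by
  cases j <;> simp [hp.symm i]

theorem abCoeff_mul_X_zero_le (hp : IsSymmUnimodal p) {i j k l : ℕ} (hs : i + j = k + l)
    (hm : min i j < min k l) : abCoeff (p * X 0) i j ≤ abCoeff (p * X 0) k l := by
  obtain _ | i := i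
  · simpa using hp.abCoeff_mul_X_zero_nonneg k l
  obtain _ | k := k
  · omega
  simpa using hp.le_of_min_le (by omega) (by omega)

theorem mul_X_zero_add_X_one (hp : IsSymmUnimodal p) : IsSymmUnimodal (p * (X 0 + X 1)) where
  nonneg i j := by
    rw [mul_add, map_add, Pi.add_apply, Pi.add_apply, hp.abCoeff_mul_X_one_eq]
    exact add_nonneg (hp.abCoeff_mul_X_zero_nonneg i j) (hp.abCoeff_mul_X_zero_nonneg j i)
  symm i j := by
    simp only [mul_add, map_add, Pi.add_apply, hp.abCoeff_mul_X_one_eq, add_comm]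
  le_of_min_lt {i j k l} hs hm := by
    simp only [mul_add, map_add, Pi.add_apply, hp.abCoeff_mul_X_one_eq]
    exact add_le_add (hp.abCoeff_mul_X_zero_le hs hm)
      (hp.abCoeff_mul_X_zero_le (by omega) (by omega))

theorem mul_X_zero_mul_X_one (hp : IsSymmUnimodal p) : IsSymmUnimodal (p * (X 0 * X 1)) := by
  have hcoeff : ∀ i j, abCoeff (p * (X 0 * X 1)) i j =
      if i = 0 ∨ j = 0 then 0 else abCoeff p (i - 1) (j - 1) := by
    intro i j
    rw [← mul_assoc]
    rcases i with _ | i <;> rcases j with _ | j <;> simp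
  refine ⟨fun i j => ?_, fun i j => ?_, fun {i j k l} hs hm => ?_⟩ <;> simp only [hcoeff]
  · split
    · exact le_rfl
    · exact hp.nonneg _ _
  · simp only [or_comm, hp.symm (i - 1)]
  · rw [if_neg (show ¬(k = 0 ∨ l = 0) by omega)]
    split
    · exact hp.nonneg _ _
    · exact hp.le_of_min_le (by omega) (by omega)

theorem mul_X_zero_mul_X_one_add_X_one_mul_X_zero (hp : IsSymmUnimodal p) :
    IsSymmUnimodal (p * (X 0 * X 1 + X 1 * X 0)) := by
  rw [mul_comm (X 1), mul_add]
  exact hp.mul_X_zero_mul_X_one.add hp.mul_X_zero_mul_X_one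

theorem abCoeff_mem (hp : IsSymmUnimodal p) : abCoeff p ∈ unimodalOnAntidiagonals :=
  fun _ _ _ _ hs hm => hp.le_of_min_le hs (by omega)

theorem abCoeff_mul_X_zero_mem (hp : IsSymmUnimodal p) :
    abCoeff (p * X 0) ∈ unimodalOnAntidiagonals := by
  intro i j k l hs hm
  obtain _ | i := i
  · simpa using hp.abCoeff_mul_X_zero_nonneg k l
  obtain _ | k := k
  · omega
  simpa using hp.le_of_min_le (by omega) (by omega)

theorem abCoeff_mul_X_one_mem (hp : IsSymmUnimodal p) :
    abCoeff (p * X 1) ∈ unimodalOnAntidiagonals := by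
  have hswap : abCoeff (p * X 1) = fun i j => abCoeff (p * X 0) j i :=
    funext₂ hp.abCoeff_mul_X_one_eq
  exact hswap ▸ swap_mem_unimodalOnAntidiagonals hp.abCoeff_mul_X_zero_mem

end IsSymmUnimodal

theorem isSymmUnimodal_abelianize_of_mem_cdMonomials {x : FreeAlgebra ℤ (Fin 2)}
    (hx : x ∈ cdMonomials) : IsSymmUnimodal (abelianize x) := by
  obtain ⟨w, rfl⟩ := hx
  induction w with
  | nil => simpa using isSymmUnimodal_one
  | cons t w ih =>
    rw [List.map_cons, List.prod_cons, map_mul, mul_comm]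
    cases t
    · simpa using ih.mul_X_zero_add_X_one
    · simpa using ih.mul_X_zero_mul_X_one_add_X_one_mul_X_zero

theorem abCoeff_abelianize_mul_mem {M : FreeAlgebra ℤ (Fin 2)}
    (hM : ∀ {q}, IsSymmUnimodal q → abCoeff (q * abelianize M) ∈ unimodalOnAntidiagonals)
    {Φ : FreeAlgebra ℤ (Fin 2)} (hΦ : Φ ∈ AddSubmonoid.closure cdMonomials) :
    abCoeff (abelianize (Φ * M)) ∈ unimodalOnAntidiagonals := by
  induction hΦ using AddSubmonoid.closure_induction with
  | mem x hx => simpa using hM (isSymmUnimodal_abelianize_of_mem_cdMonomials hx)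
  | zero => simp [zero_mem]
  | add x y _ _ hx hy => simpa [add_mul] using add_mem hx hy

theorem card_filter_succ_mem {n : ℕ} {S : Finset ℕ} (hS : S ⊆ Finset.Icc 1 n) :
    (Finset.univ.filter fun i : Fin n => (i : ℕ) + 1 ∈ S).card = S.card := by
  refine Finset.card_nbij (fun i => (i : ℕ) + 1) (fun i hi => (Finset.mem_filter.1 hi).2)
    (fun i _ j _ hij => Fin.ext (by simpa using hij)) fun s hs => ?_
  have hs' := Finset.mem_Icc.1 (hS hs)
  exact ⟨⟨s - 1, by omega⟩, by simpa [Nat.sub_add_cancel hs'.1] using hs, by simp; omega⟩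

theorem abelianize_wMon {n : ℕ} {S : Finset ℕ} (hS : S ⊆ Finset.Icc 1 n) :
    abelianize (wMon n S) = X 0 ^ (n - S.card) * X 1 ^ S.card := by
  rw [wMon, map_list_prod, List.map_ofFn, List.prod_ofFn]
  simp only [Function.comp_def, apply_ite abelianize, abelianize_abA, abelianize_abB]
  rw [Finset.prod_ite, Finset.prod_const, Finset.prod_const, mul_comm, card_filter_succ_mem hS]
  congr 2
  have := Finset.card_filter_add_card_filter_not
    (s := (Finset.univ : Finset (Fin n))) fun i : Fin n => (i : ℕ) + 1 ∈ S
  rw [card_filter_succ_mem hS, Finset.card_univ, Fintype.card_fin] at this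
  omega

theorem abCoeff_abelianize_sum_wMon (n : ℕ) (h : Finset ℕ → ℤ) (i : ℕ) :
    abCoeff (abelianize (∑ S ∈ (Finset.Icc 1 n).powerset, h S • wMon n S)) (n - i) i =
      ∑ S ∈ (Finset.Icc 1 n).powerset.filter (fun S => S.card = i), h S := by
  rw [Finset.sum_filter, map_sum, map_sum, Finset.sum_apply, Finset.sum_apply]
  refine Finset.sum_congr rfl fun S hS => ?_
  have hSn := Finset.mem_powerset.1 hS
  have hcard : S.card ≤ n := by simpa using Finset.card_le_card hSn
  rw [map_zsmul, map_zsmul, Pi.smul_apply, Pi.smul_apply, abelianize_wMon hSn,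
    abCoeff_X_pow_mul_X_pow, smul_eq_mul]
  by_cases hSi : S.card = i <;> simp [hSi]

theorem exists_unimodal_of_monotone_halves {α : Type*} [LinearOrder α] {n : ℕ} {t : ℕ → α}
    (hup : ∀ i j, i ≤ j → 2 * j ≤ n → t i ≤ t j)
    (hdown : ∀ i j, n ≤ 2 * i → i ≤ j → j ≤ n → t j ≤ t i) :
    ∃ p ≤ n, (∀ i j, i ≤ j → j ≤ p → t i ≤ t j) ∧
      (∀ i j, p ≤ i → i ≤ j → j ≤ n → t j ≤ t i) := by
  rcases le_total (t (n / 2)) (t (n - n / 2)) with hmid | hmid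
  · refine ⟨n - n / 2, by omega, fun i j hij hj => ?_, fun i j hi => hdown i j (by omega)⟩
    by_cases hj2 : 2 * j ≤ n
    · exact hup i j hij hj2
    obtain rfl | hij := hij.eq_or_lt
    · exact le_rfl
    obtain rfl : j = n - n / 2 := by omega
    exact (hup i (n / 2) (by omega) (by omega)).trans hmid
  · refine ⟨n / 2, by omega, fun i j hij hj => hup i j hij (by omega), fun i j hi hij hj => ?_⟩
    by_cases hi2 : n ≤ 2 * i
    · exact hdown i j hi2 hij hj
    obtain rfl | hij := hij.eq_or_lt
    · exact le_rfl
    obtain rfl : i = n / 2 := by omega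
    exact (hdown (n - n / 2) j (by omega) (by omega) hj).trans hmid

theorem h_vector_unimodal_of_cd_decomposition_general
    (n : ℕ)
    (h : Finset ℕ → ℤ)
    (Φd Φa Φb : FreeAlgebra ℤ (Fin 2))
    (hΦd : Φd ∈ AddSubmonoid.closure cdMonomials)
    (hΦa : Φa ∈ AddSubmonoid.closure cdMonomials)
    (hΦb : Φb ∈ AddSubmonoid.closure cdMonomials)
    (hΨ : (∑ S ∈ (Finset.Icc 1 n).powerset, h S • wMon n S) =
      Φd * (abA * abB + abB * abA) + Φa * abA + Φb * abB)
    (hvec : ℕ → ℤ)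
    (hhvec : ∀ i : ℕ, hvec i =
      ∑ S ∈ (Finset.Icc 1 n).powerset.filter (fun S => S.card = i), h S) :
    ∃ p ≤ n, (∀ i j, i ≤ j → j ≤ p → hvec i ≤ hvec j) ∧
      (∀ i j, p ≤ i → i ≤ j → j ≤ n → hvec j ≤ hvec i) := by
  have hd := abCoeff_abelianize_mul_mem (M := abA * abB + abB * abA)
    (fun hq => by simpa using hq.mul_X_zero_mul_X_one_add_X_one_mul_X_zero.abCoeff_mem) hΦd
  have ha := abCoeff_abelianize_mul_mem (M := abA)
    (fun hq => by simpa using hq.abCoeff_mul_X_zero_mem) hΦa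
  have hb := abCoeff_abelianize_mul_mem (M := abB)
    (fun hq => by simpa using hq.abCoeff_mul_X_one_mem) hΦb
  have hΨmem : abCoeff (abelianize (∑ S ∈ (Finset.Icc 1 n).powerset, h S • wMon n S)) ∈
      unimodalOnAntidiagonals := by
    rw [hΨ, map_add, map_add, map_add, map_add]
    exact add_mem (add_mem hd ha) hb
  have hvec_eq : ∀ i, hvec i =
      abCoeff (abelianize (∑ S ∈ (Finset.Icc 1 n).powerset, h S • wMon n S)) (n - i) i :=
    fun i => by rw [hhvec, abCoeff_abelianize_sum_wMon]
  refine exists_unimodal_of_monotone_halves (fun i j hij hj => ?_) fun i j hi hij hj => ?_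
  · rw [hvec_eq, hvec_eq]
    exact hΨmem _ _ _ _ (by omega) (Or.inl ⟨hij, by omega⟩)
  · rw [hvec_eq, hvec_eq]
    exact hΨmem _ _ _ _ (by omega) (Or.inr ⟨by omega, by omega⟩)

/-- Let `P` be a finite (graded) poset of rank `n` and suppose its
ab-index `Ψ_P = ∑_{S ⊆ [n]} h_S(P) w_S` can be written as
`Φᵈ·d + Φᵃ·a + Φᵇ·b` with cd-polynomials `Φᵈ, Φᵃ, Φᵇ` having non-negative
coefficients (i.e. lying in the additive monoid generated by cd-monomials).
Then the `h`-vector `(h_0, …, h_n)` of `Δ_P`, `h_i = ∑_{|S| = i} h_S(P)`,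
is unimodal. -/
theorem h_vector_unimodal_of_cd_decomposition
    {P : Type} [Fintype P] [PartialOrder P] [OrderBot P] [DecidableEq P]
    (n : ℕ) (rank : P → ℕ)
    (hrank0 : ∀ x : P, rank x = 0 ↔ x = ⊥)
    (hcov : ∀ x y : P, x ⋖ y → rank y = rank x + 1)
    (hrkn : ∀ x : P, rank x ≤ n)
    (f h : Finset ℕ → ℤ)
    (hf : ∀ S : Finset ℕ, f S =
      ((Finset.univ.powerset.filter (fun C : Finset P =>
        (∀ x ∈ C, ∀ y ∈ C, x ≤ y ∨ y ≤ x) ∧ ⊥ ∉ C ∧ C.image rank = S)).card : ℤ))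
    (hh : ∀ S : Finset ℕ, h S =
      ∑ T ∈ S.powerset, (-1 : ℤ) ^ (S.card - T.card) * f T)
    (Φd Φa Φb : FreeAlgebra ℤ (Fin 2))
    (hΦd : Φd ∈ AddSubmonoid.closure cdMonomials)
    (hΦa : Φa ∈ AddSubmonoid.closure cdMonomials)
    (hΦb : Φb ∈ AddSubmonoid.closure cdMonomials)
    (hΨ : (∑ S ∈ (Finset.Icc 1 n).powerset, h S • wMon n S) =
      Φd * (abA * abB + abB * abA) + Φa * abA + Φb * abB)
    (hvec : ℕ → ℤ)
    (hhvec : ∀ i : ℕ, hvec i =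
      ∑ S ∈ (Finset.Icc 1 n).powerset.filter (fun S => S.card = i), h S) :
    ∃ p ≤ n, (∀ i j, i ≤ j → j ≤ p → hvec i ≤ hvec j) ∧
      (∀ i j, p ≤ i → i ≤ j → j ≤ n → hvec j ≤ hvec i) :=
  h_vector_unimodal_of_cd_decomposition_general n h Φd Φa Φb hΦd hΦa hΦb hΨ hvec hhvec
end

section
/- Let M be a squarefree P-module over a field K for a finite poset P. Then as graded K-vector spaces, M decomposes as the direct sum over σ ∈ P of M_{e_σ} ⊗_K K[⟨σ⟩], where K[⟨σ⟩] is the Stanley–Reisner ring of the order complex of the principal order ideal ⟨σ⟩. -/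
open Classical DirectSum

/-- `P̂ = P \ {⊥}`. -/
abbrev Phat (P : Type) [PartialOrder P] [OrderBot P] := {σ : P // σ ≠ ⊥}

variable {K : Type} [Field K] {P : Type} [Fintype P] [PartialOrder P] [OrderBot P]
  [DecidableEq P]

/-- `supp u` is a face of the order complex `Δ_P`, i.e. a chain of `P̂`. -/
def ChainSupp (u : Phat P →₀ ℕ) : Prop :=
  ∀ σ ∈ u.support, ∀ τ ∈ u.support, (σ : P) ≤ (τ : P) ∨ (τ : P) ≤ (σ : P)

/-- `τ ≤ max (supp u)` (in particular `supp u` has a maximum). -/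
def LeMaxSupp (u : Phat P →₀ ℕ) (τ : Phat P) : Prop :=
  ∃ ρ ∈ u.support, (τ : P) ≤ (ρ : P) ∧ ∀ σ ∈ u.support, (σ : P) ≤ (ρ : P)

/-- A squarefree `P`-module: a finitely generated `ℕ^{|P̂|}`-graded module `M` over
`R = K[x_σ : σ ∈ P̂]` (the grading `π` being given by `K`-subspaces with
`x_τ · M_u ⊆ M_{u + e_τ}`) such that
(a) `M_u = 0` whenever `supp u ∉ Δ_P`, and
(b) `×x_τ : M_u → M_{u+e_τ}` is bijective whenever `supp (u + e_τ) ∈ Δ_P` and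
`τ ≤ max (supp u)`. -/
def IsSquarefreePMod (M : Type) [AddCommGroup M]
    [Module (MvPolynomial (Phat P) K) M] [Module K M]
    [IsScalarTower K (MvPolynomial (Phat P) K) M]
    (π : (Phat P →₀ ℕ) → Submodule K M) : Prop :=
  DirectSum.IsInternal π ∧
  Module.Finite (MvPolynomial (Phat P) K) M ∧
  (∀ u, FiniteDimensional K (π u)) ∧
  (∀ (u) (τ : Phat P), ∀ x ∈ π u,
    (MvPolynomial.X τ : MvPolynomial (Phat P) K) • x ∈ π (u + Finsupp.single τ 1)) ∧
  (∀ u, ¬ ChainSupp u → π u = ⊥) ∧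
  (∀ (u) (τ : Phat P), ChainSupp (u + Finsupp.single τ 1) → LeMaxSupp u τ →
    Set.BijOn (fun x => (MvPolynomial.X τ : MvPolynomial (Phat P) K) • x)
      (↑(π u) : Set M) (↑(π (u + Finsupp.single τ 1)) : Set M))

/-- The exponent vector `e_σ` (with `e_⊥ = 0`). -/
noncomputable def eVec (σ : P) : Phat P →₀ ℕ :=
  if h : σ = ⊥ then 0 else Finsupp.single ⟨σ, h⟩ 1

/-- The degree-`u` component of the summand `M_{e_σ} ⊗_K K[⟨σ⟩]` (the elements of
`M_{e_σ}` having degree `e_σ`) is nonzero exactly when this condition holds: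
either `σ = ⊥` and `u = 0`, or `u = e_σ + v` where `x^v ∈ K[⟨σ⟩]`, i.e. `supp u`
is a chain contained in `⟨σ⟩ = {τ : τ ≤ σ}` and containing `σ`. -/
def SummandCond (σ : P) (u : Phat P →₀ ℕ) : Prop :=
  (σ = ⊥ ∧ u = 0) ∨
    (∃ h : σ ≠ ⊥, ChainSupp u ∧ (∀ τ ∈ u.support, (τ : P) ≤ σ) ∧ 1 ≤ u ⟨σ, h⟩)

/-!
In degree `u` at most one summand `M_{e_σ} ⊗ K[⟨σ⟩]` is nonzero: none when `supp u` is not a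
chain (and then `M_u = 0`), the one for `σ = ⊥` when `u = 0`, and otherwise the one for the top
element `σ` of the chain `supp u`. In the last case `u - e_σ` is supported in `⟨σ⟩`, so removing
the variables `x_τ`, `τ ≤ σ`, one at a time, condition (b) identifies `M_u` with `M_{e_σ}`.
-/

noncomputable def LinearEquiv.ofBijOn {R M₁ M₂ : Type*} [Semiring R] [AddCommMonoid M₁]
    [AddCommMonoid M₂] [Module R M₁] [Module R M₂] (f : M₁ →ₗ[R] M₂) {N₁ : Submodule R M₁}
    {N₂ : Submodule R M₂} (h : Set.BijOn f N₁ N₂) : N₁ ≃ₗ[R] N₂ :=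
  LinearEquiv.ofBijective (f.restrict h.mapsTo) h.bijective

noncomputable def DirectSum.lequivOfUnique (R : Type*) [Semiring R] {ι : Type*} [Unique ι]
    (β : ι → Type*) [∀ i, AddCommMonoid (β i)] [∀ i, Module R (β i)] :
    (⨁ i, β i) ≃ₗ[R] β default :=
  (DirectSum.linearEquivFunOnFintype R ι β).trans (LinearEquiv.piUnique R β)

omit [Fintype P] [DecidableEq P] in
theorem ChainSupp.mono {u v : Phat P →₀ ℕ} (hv : ChainSupp v) (h : u.support ⊆ v.support) :
    ChainSupp u :=
  fun σ hσ τ hτ => hv σ (h hσ) τ (h hτ)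

omit [Fintype P] [DecidableEq P] in
theorem ChainSupp.exists_max {u : Phat P →₀ ℕ} (hc : ChainSupp u) (hu : u ≠ 0) :
    ∃ ρ ∈ u.support, ∀ σ ∈ u.support, (σ : P) ≤ ρ := by
  obtain ⟨ρ, hρ, hρmax⟩ := Finset.exists_maximal (Finsupp.support_nonempty_iff.2 hu)
  refine ⟨ρ, hρ, fun σ hσ => ?_⟩
  rcases hc ρ hρ σ hσ with hρσ | hσρ
  · exact hρmax hσ (Subtype.coe_le_coe.1 hρσ)
  · exact hσρ

omit [Fintype P] in
theorem eVec_bot : eVec (⊥ : P) = 0 :=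
  dif_pos rfl

omit [Fintype P] in
theorem eVec_coe (ρ : Phat P) : eVec (ρ : P) = Finsupp.single ρ 1 :=
  dif_neg ρ.2

omit [Fintype P] [DecidableEq P] in
theorem summandCond_zero_iff (σ : P) : SummandCond σ 0 ↔ σ = ⊥ := by
  refine ⟨?_, fun hσ => Or.inl ⟨hσ, rfl⟩⟩
  rintro (⟨hσ, -⟩ | ⟨_, -, -, h⟩)
  · exact hσ
  · simp at h

omit [Fintype P] [DecidableEq P] in
theorem summandCond_iff_of_isMax {u : Phat P →₀ ℕ} {ρ : Phat P} (hc : ChainSupp u)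
    (hρ : ρ ∈ u.support) (hmax : ∀ σ ∈ u.support, (σ : P) ≤ ρ) (σ : P) :
    SummandCond σ u ↔ σ = ρ := by
  constructor
  · rintro (⟨-, rfl⟩ | ⟨hσ, -, hle, h⟩)
    · simp at hρ
    · exact le_antisymm (hmax ⟨σ, hσ⟩ (Finsupp.mem_support_iff.2 (Nat.one_le_iff_ne_zero.1 h)))
        (hle ρ hρ)
  · rintro rfl
    exact Or.inr ⟨ρ.2, hc, hmax, Nat.one_le_iff_ne_zero.2 (Finsupp.mem_support_iff.1 hρ)⟩

omit [Fintype P] [DecidableEq P] in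
theorem not_summandCond_of_not_chainSupp {u : Phat P →₀ ℕ} (hc : ¬ ChainSupp u) (σ : P) :
    ¬ SummandCond σ u := by
  rintro (⟨-, rfl⟩ | ⟨-, hc', -⟩)
  · exact hc (by simp [ChainSupp])
  · exact hc hc'

namespace IsSquarefreePMod

variable {M : Type} [AddCommGroup M] [Module (MvPolynomial (Phat P) K) M] [Module K M]
  [IsScalarTower K (MvPolynomial (Phat P) K) M] {π : (Phat P →₀ ℕ) → Submodule K M}

omit [Fintype P] in
theorem eq_bot_of_not_chainSupp (hM : IsSquarefreePMod (K := K) M π) {u : Phat P →₀ ℕ}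
    (hc : ¬ ChainSupp u) : π u = ⊥ :=
  hM.2.2.2.2.1 u hc

omit [Fintype P] in
theorem nonempty_equiv_add_single (hM : IsSquarefreePMod (K := K) M π) {u : Phat P →₀ ℕ}
    {τ : Phat P} (hc : ChainSupp (u + Finsupp.single τ 1)) (hτ : LeMaxSupp u τ) :
    Nonempty (π u ≃ₗ[K] π (u + Finsupp.single τ 1)) :=
  ⟨LinearEquiv.ofBijOn (DistribSMul.toLinearMap K M (MvPolynomial.X τ)) (hM.2.2.2.2.2 u τ hc hτ)⟩

omit [Fintype P] in
theorem nonempty_equiv_of_single_le (hM : IsSquarefreePMod (K := K) M π) {ρ : Phat P}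
    {u : Phat P →₀ ℕ} (hρ : Finsupp.single ρ 1 ≤ u) (hc : ChainSupp u)
    (hmax : ∀ σ ∈ u.support, (σ : P) ≤ ρ) :
    Nonempty (π (Finsupp.single ρ 1) ≃ₗ[K] π u) := by
  induction u using WellFoundedLT.induction with
  | _ u ih =>
    by_cases hu : u = Finsupp.single ρ 1
    · subst hu
      exact ⟨LinearEquiv.refl K _⟩
    obtain ⟨τ, hτ⟩ : ∃ τ, Finsupp.single ρ 1 + Finsupp.single τ 1 ≤ u := by
      have hne : u - Finsupp.single ρ 1 ≠ 0 := (tsub_pos_of_lt (hρ.lt_of_ne (Ne.symm hu))).ne'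
      obtain ⟨τ, hτ⟩ := Finsupp.support_nonempty_iff.2 hne
      refine ⟨τ, (le_tsub_iff_left hρ).1 (Finsupp.single_le_iff.2 ?_)⟩
      exact Nat.one_le_iff_ne_zero.2 (Finsupp.mem_support_iff.1 hτ)
    set v := u - Finsupp.single τ 1
    have hvu : v + Finsupp.single τ 1 = u := tsub_add_cancel_of_le (le_add_self.trans hτ)
    have hρv : Finsupp.single ρ 1 ≤ v := le_tsub_of_add_le_right hτ
    have hvsupp : v.support ⊆ u.support := Finsupp.support_mono tsub_le_self
    have hvlt : v < u := hvu ▸ lt_add_of_pos_right v (by simp [pos_iff_ne_zero])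
    have hρmem : ρ ∈ v.support :=
      Finsupp.mem_support_iff.2 (Nat.one_le_iff_ne_zero.1 (Finsupp.single_le_iff.1 hρv))
    have hτρ : (τ : P) ≤ ρ := hmax τ (Finsupp.support_mono (le_add_self.trans hτ) (by simp))
    obtain ⟨e⟩ := ih v hvlt hρv (hc.mono hvsupp) fun σ hσ => hmax σ (hvsupp hσ)
    obtain ⟨e'⟩ := hM.nonempty_equiv_add_single (hvu ▸ hc)
      ⟨ρ, hρmem, hτρ, fun σ hσ => hmax σ (hvsupp hσ)⟩
    exact ⟨e.trans (e'.trans (LinearEquiv.ofEq _ _ (congrArg π hvu)))⟩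

omit [Fintype P] in
theorem exists_summandCond_iff_and_nonempty_equiv (hM : IsSquarefreePMod (K := K) M π)
    {u : Phat P →₀ ℕ} (hc : ChainSupp u) :
    ∃ ρ : P, (∀ σ, SummandCond σ u ↔ σ = ρ) ∧ Nonempty (π u ≃ₗ[K] π (eVec ρ)) := by
  by_cases hu : u = 0
  · subst hu
    exact ⟨⊥, summandCond_zero_iff, ⟨LinearEquiv.ofEq _ _ (by rw [eVec_bot])⟩⟩
  obtain ⟨ρ, hρ, hmax⟩ := hc.exists_max hu
  have hρu : Finsupp.single ρ 1 ≤ u :=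
    Finsupp.single_le_iff.2 (Nat.one_le_iff_ne_zero.2 (Finsupp.mem_support_iff.1 hρ))
  obtain ⟨e⟩ := hM.nonempty_equiv_of_single_le hρu hc hmax
  exact ⟨ρ, summandCond_iff_of_isMax hc hρ hmax,
    ⟨e.symm.trans (LinearEquiv.ofEq _ _ (by rw [eVec_coe]))⟩⟩

end IsSquarefreePMod

/-- Lemma 2.3.  If `M` is a squarefree `P`-module over a field
`K`, then as graded `K`-vector spaces `M` decomposes as
`⊕_{σ ∈ P} (M_{e_σ} ⊗_K K[⟨σ⟩])`: in each degree `u`, the component `M_u` is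
`K`-linearly isomorphic to the direct sum over `σ ∈ P` of the degree-`u`
components of `M_{e_σ} ⊗_K K[⟨σ⟩]` (each such component being a copy of
`M_{e_σ} ⊗_K K ≅ M_{e_σ}`). -/
theorem squarefree_decomposition
    (M : Type) [AddCommGroup M]
    [Module (MvPolynomial (Phat P) K) M] [Module K M]
    [IsScalarTower K (MvPolynomial (Phat P) K) M]
    (π : (Phat P →₀ ℕ) → Submodule K M)
    (hM : IsSquarefreePMod (K := K) M π) :
    ∀ u : Phat P →₀ ℕ,
      Nonempty ((π u) ≃ₗ[K] ⨁ σ : {σ : P // SummandCond σ u}, π (eVec σ.1)) := by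
  intro u
  by_cases hc : ChainSupp u
  · obtain ⟨ρ, hρ, ⟨e⟩⟩ := hM.exists_summandCond_iff_and_nonempty_equiv hc
    let _ : Unique {σ : P // SummandCond σ u} :=
      ⟨⟨⟨ρ, (hρ ρ).2 rfl⟩⟩, fun σ => Subtype.ext ((hρ σ).1 σ.2)⟩
    exact ⟨e.trans (DirectSum.lequivOfUnique K fun σ : {σ : P // SummandCond σ u} =>
      π (eVec σ.1)).symm⟩
  · have : IsEmpty {σ : P // SummandCond σ u} :=
      ⟨fun σ => not_summandCond_of_not_chainSupp hc σ.1 σ.2⟩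
    have : Subsingleton (π u) := Submodule.subsingleton_iff_eq_bot.2 (hM.eq_bot_of_not_chainSupp hc)
    exact ⟨LinearEquiv.ofSubsingleton _ _⟩
end

section
/- If φ : N → M is a degree-preserving R-homomorphism between squarefree P-modules, then ker φ, im φ, and coker φ are squarefree P-modules. -/
open Classical DirectSum

variable {K : Type} [Field K] {P : Type} [Fintype P] [PartialOrder P] [OrderBot P]
  [DecidableEq P]

/-!
Since `φ` preserves degrees, it commutes with the projections onto the graded pieces. Hence
`ker φ` and `im φ` are graded submodules, and a homogeneous element of `im φ` of degree `u` has a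
preimage of degree `u`; so the induced gradings of `ker φ`, `im φ` and `coker φ` are again
internal direct sums, and finiteness and condition (a) pass to submodules and quotients.

For (b), call a submodule `S ⊆ M` saturated if `x ∈ M_u` and `x_τ x ∈ S` imply `x ∈ S` whenever
`×x_τ : M_u → M_{u+e_τ}` is one of the bijections of (b). Saturation is exactly what makes these
bijections restrict to `S` and descend to `M ⧸ S`. The kernel is saturated because `×x_τ` is
injective on `M_u`. The image is saturated because a lift of `x_τ x` to `N_{u+e_τ}` has the form
`x_τ m` with `m ∈ N_u`, and then `x = φ m` after cancelling `x_τ` on `M_u`.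
-/

section GradedSubmodule

variable {ι R A N M : Type*} [DecidableEq ι] [Semiring R] [Ring A]
  [AddCommGroup N] [AddCommGroup M] [Module R N] [Module R M] [Module A N] [Module A M]
  {πN : ι → Submodule A N} {πM : ι → Submodule A M} [Decomposition πN] [Decomposition πM]

theorem decompose_eq_zero_of_mem_iSup_ne {i : ι} {x : M} (hx : x ∈ ⨆ j, ⨆ _ : j ≠ i, πM j) :
    (decompose πM x i : M) = 0 := by
  let proj : M →ₗ[A] πM i :=
    (DirectSum.component A ι (fun j => πM j) i).comp (decomposeLinearEquiv πM).toLinearMap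
  have hle : ⨆ j, ⨆ _ : j ≠ i, πM j ≤ LinearMap.ker proj :=
    iSup₂_le fun j hj y hy => LinearMap.mem_ker.mpr (Subtype.ext (decompose_of_mem_ne πM hy hj))
  exact congrArg Subtype.val (LinearMap.mem_ker.mp (hle hx))

theorem coe_decompose_map (φ : N →ₗ[R] M) (hφ : ∀ i, ∀ x ∈ πN i, φ x ∈ πM i) (x : N) (i : ι) :
    (decompose πM (φ x) i : M) = φ (decompose πN x i) := by
  induction x using DirectSum.Decomposition.inductionOn πN with
  | zero => simp
  | @homogeneous j m =>
    by_cases hji : j = i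
    · subst hji
      rw [decompose_of_mem_same _ (hφ _ _ m.2), decompose_coe, of_eq_same]
    · rw [decompose_of_mem_ne _ (hφ _ _ m.2) hji, decompose_coe, of_eq_of_ne _ _ _ (Ne.symm hji),
        ZeroMemClass.coe_zero, map_zero]
  | add x y hx hy => simp [decompose_add, hx, hy]

theorem LinearMap.isHomogeneous_ker (φ : N →ₗ[R] M) (hφ : ∀ i, ∀ x ∈ πN i, φ x ∈ πM i) :
    SetLike.IsHomogeneous πN (LinearMap.ker φ) := fun i x hx => by
  rw [LinearMap.mem_ker, ← coe_decompose_map φ hφ, LinearMap.mem_ker.mp hx, decompose_zero,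
    DirectSum.zero_apply, ZeroMemClass.coe_zero]

theorem LinearMap.isHomogeneous_range (φ : N →ₗ[R] M) (hφ : ∀ i, ∀ x ∈ πN i, φ x ∈ πM i) :
    SetLike.IsHomogeneous πM (LinearMap.range φ) := by
  rintro i _ ⟨x, rfl⟩
  exact ⟨_, (coe_decompose_map φ hφ x i).symm⟩

theorem LinearMap.exists_mem_eq_of_mem_range (φ : N →ₗ[R] M)
    (hφ : ∀ i, ∀ x ∈ πN i, φ x ∈ πM i) {i : ι} {y : M} (hy : y ∈ πM i)
    (hyφ : y ∈ LinearMap.range φ) : ∃ x ∈ πN i, φ x = y := by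
  obtain ⟨x, rfl⟩ := hyφ
  exact ⟨_, (decompose πN x i).2, by rw [← coe_decompose_map φ hφ, decompose_of_mem_same _ hy]⟩

end GradedSubmodule

section InducedGrading

variable {ι R A M : Type*} [DecidableEq ι] [Ring R] [Ring A] [AddCommGroup M] [Module R M]
  [Module A M] [SMul A R] [IsScalarTower A R M] {π : ι → Submodule A M} [Decomposition π]
  {S : Submodule R M}

theorem isInternal_comap_subtype_of_isHomogeneous (hS : SetLike.IsHomogeneous π S) :
    IsInternal fun i => (π i).comap (S.restrictScalars A).subtype := by
  rw [isInternal_submodule_iff_iSupIndep_and_iSup_eq_top]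
  refine ⟨fun i => Submodule.disjoint_def.mpr fun x hxi hx => ?_, eq_top_iff.mpr ?_⟩
  · have hle : ⨆ j, ⨆ _ : j ≠ i, (π j).comap (S.restrictScalars A).subtype ≤
        (⨆ j, ⨆ _ : j ≠ i, π j).comap (S.restrictScalars A).subtype :=
      iSup₂_le fun j hj => Submodule.comap_mono (le_iSup₂ (f := fun j _ => π j) j hj)
    have hxi : (x : M) ∈ π i := hxi
    have hx : (x : M) ∈ ⨆ j, ⨆ _ : j ≠ i, π j := hle hx
    refine Subtype.ext ?_
    rw [← decompose_of_mem_same π hxi, decompose_eq_zero_of_mem_iSup_ne hx, ZeroMemClass.coe_zero]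
  · rintro x -
    have hx : x = ∑ i ∈ (decompose π (x : M)).support, ⟨decompose π (x : M) i, hS i x.2⟩ :=
      Subtype.ext (by rw [Submodule.coe_sum]; exact (sum_support_decompose π (x : M)).symm)
    rw [hx]
    exact Submodule.sum_mem _ fun i _ => Submodule.mem_iSup_of_mem i (decompose π (x : M) i).2

theorem isInternal_map_mkQ_of_isHomogeneous (hS : SetLike.IsHomogeneous π S) :
    IsInternal fun i => (π i).map (S.mkQ.restrictScalars A) := by
  rw [isInternal_submodule_iff_iSupIndep_and_iSup_eq_top]
  refine ⟨fun i => Submodule.disjoint_def.mpr ?_, ?_⟩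
  · rintro _ ⟨a, ha, rfl⟩ hb
    simp only [← Submodule.map_iSup] at hb
    obtain ⟨b, hb, hab⟩ := hb
    have hab : a - b ∈ S := (Submodule.Quotient.eq S).mp hab.symm
    have ha_mem : (decompose π (a - b) i : M) ∈ S := hS i hab
    rw [decompose_sub, DirectSum.sub_apply, AddSubgroupClass.coe_sub, decompose_of_mem_same π ha,
      decompose_eq_zero_of_mem_iSup_ne hb, sub_zero] at ha_mem
    exact (Submodule.Quotient.mk_eq_zero S).mpr ha_mem
  · rw [← Submodule.map_iSup, (Decomposition.isInternal π).submodule_iSup_eq_top,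
      Submodule.map_top, LinearMap.range_eq_top]
    exact S.mkQ_surjective

end InducedGrading

section SmulBijOn

variable {R M : Type*} [Ring R] [AddCommGroup M] [Module R M] (S : Submodule R M) (a : R)

theorem bijOn_smul_preimage_val {A B : Set M} (h : Set.BijOn (a • ·) A B)
    (hS : ∀ x ∈ A, a • x ∈ S → x ∈ S) :
    Set.BijOn (fun x : S => a • x) (Subtype.val ⁻¹' A) (Subtype.val ⁻¹' B) := by
  refine ⟨fun x hx => h.mapsTo hx, fun x hx y hy hxy => Subtype.ext (h.injOn hx hy
    (congrArg Subtype.val hxy)), fun y hy => ?_⟩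
  obtain ⟨x, hx, hxy⟩ := h.surjOn hy
  exact ⟨⟨x, hS x hx ((show a • x = y from hxy) ▸ y.2)⟩, hx, Subtype.ext hxy⟩

theorem bijOn_smul_image_mkQ {A : AddSubgroup M} {B : Set M} (h : Set.BijOn (a • ·) (A : Set M) B)
    (hS : ∀ x ∈ A, a • x ∈ S → x ∈ S) :
    Set.BijOn (fun y : M ⧸ S => a • y) (S.mkQ '' A) (S.mkQ '' B) := by
  refine ⟨?_, ?_, ?_⟩
  · rintro _ ⟨x, hx, rfl⟩
    exact ⟨a • x, h.mapsTo hx, map_smul S.mkQ a x⟩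
  · rintro _ ⟨x, hx, rfl⟩ _ ⟨y, hy, rfl⟩ hxy
    have hxy : a • (x - y) ∈ S := by
      rw [smul_sub]
      refine (Submodule.Quotient.eq S).mp ?_
      rw [Submodule.Quotient.mk_smul, Submodule.Quotient.mk_smul]
      exact hxy
    exact (Submodule.Quotient.eq S).mpr (hS _ (A.sub_mem hx hy) hxy)
  · rintro _ ⟨y, hy, rfl⟩
    obtain ⟨x, hx, rfl⟩ := h.surjOn hy
    exact ⟨S.mkQ x, ⟨x, hx, rfl⟩, (map_smul S.mkQ a x).symm⟩

end SmulBijOn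

section SquarefreePMod

variable {K : Type} [Field K] {P : Type} [PartialOrder P] [OrderBot P] [DecidableEq P]
  {M : Type} [AddCommGroup M] [Module (MvPolynomial (Phat P) K) M] [Module K M]
  [IsScalarTower K (MvPolynomial (Phat P) K) M] {πM : (Phat P →₀ ℕ) → Submodule K M}
  {N : Type} [AddCommGroup N] [Module (MvPolynomial (Phat P) K) N] [Module K N]
  {πN : (Phat P →₀ ℕ) → Submodule K N}

def IsSmulSaturated (π : (Phat P →₀ ℕ) → Submodule K M)
    (S : Submodule (MvPolynomial (Phat P) K) M) : Prop :=
  ∀ (u) (τ : Phat P), ChainSupp (u + Finsupp.single τ 1) → LeMaxSupp u τ →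
    ∀ x ∈ π u, (MvPolynomial.X τ : MvPolynomial (Phat P) K) • x ∈ S → x ∈ S

theorem IsSquarefreePMod.submodule (hM : IsSquarefreePMod (K := K) M πM)
    (S : Submodule (MvPolynomial (Phat P) K) M) [Module.Finite (MvPolynomial (Phat P) K) S]
    (hint : IsInternal fun u => (πM u).comap (S.restrictScalars K).subtype)
    (hS : IsSmulSaturated πM S) :
    IsSquarefreePMod (K := K) S
      (fun u => ((πM u).comap (S.restrictScalars K).subtype : Submodule K S)) := by
  obtain ⟨-, -, hfin, hmul, hvan, hbij⟩ := hM
  refine ⟨hint, inferInstance, fun u => ?_, fun u τ x hx => hmul u τ x hx, fun u hu => ?_,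
    fun u τ hc hm => bijOn_smul_preimage_val S _ (hbij u τ hc hm) (hS u τ hc hm)⟩
  · exact Module.Finite.of_injective ((S.restrictScalars K).subtype.restrict fun _ hx => hx)
      fun x y hxy => Subtype.ext (Subtype.ext (congrArg Subtype.val hxy :))
  · refine eq_bot_iff.mpr fun x (hx : (x : M) ∈ πM u) => (Submodule.mem_bot K).mpr ?_
    rw [hvan u hu] at hx
    exact Subtype.ext ((Submodule.mem_bot K).mp hx)

theorem IsSquarefreePMod.quotient (hM : IsSquarefreePMod (K := K) M πM)
    (S : Submodule (MvPolynomial (Phat P) K) M)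
    (hint : IsInternal fun u => (πM u).map (S.mkQ.restrictScalars K))
    (hS : IsSmulSaturated πM S) :
    IsSquarefreePMod (K := K) (M ⧸ S) fun u => (πM u).map (S.mkQ.restrictScalars K) := by
  obtain ⟨-, hfinite, hfin, hmul, hvan, hbij⟩ := hM
  refine ⟨hint, inferInstance, fun u => inferInstance, ?_,
    fun u hu => by simp only [hvan u hu, Submodule.map_bot],
    fun u τ hc hm => bijOn_smul_image_mkQ S _ (A := (πM u).toAddSubgroup) (hbij u τ hc hm)
      (hS u τ hc hm)⟩
  rintro u τ _ ⟨x, hx, rfl⟩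
  exact ⟨_, hmul u τ x hx, map_smul S.mkQ _ x⟩

theorem isSmulSaturated_ker (hM : IsSquarefreePMod (K := K) M πM)
    (φ : N →ₗ[MvPolynomial (Phat P) K] M) (hφ : ∀ u, ∀ x ∈ πN u, φ x ∈ πM u) :
    IsSmulSaturated πN (LinearMap.ker φ) := by
  intro u τ hc hm x hx hXx
  refine LinearMap.mem_ker.mpr ((hM.2.2.2.2.2 u τ hc hm).injOn (hφ u x hx) (πM u).zero_mem ?_)
  change _ • φ x = _ • 0
  rw [smul_zero, ← map_smul]
  exact hXx

variable [IsScalarTower K (MvPolynomial (Phat P) K) N]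

theorem isSmulSaturated_range (hN : IsSquarefreePMod (K := K) N πN)
    (hM : IsSquarefreePMod (K := K) M πM) (φ : N →ₗ[MvPolynomial (Phat P) K] M)
    (hφ : ∀ u, ∀ x ∈ πN u, φ x ∈ πM u) : IsSmulSaturated πM (LinearMap.range φ) := by
  let _ := hN.1.chooseDecomposition
  let _ := hM.1.chooseDecomposition
  intro u τ hc hm x hx hXx
  obtain ⟨w, hw, hφw⟩ := φ.exists_mem_eq_of_mem_range hφ (hM.2.2.2.1 u τ x hx) hXx
  obtain ⟨m, hm', rfl⟩ := (hN.2.2.2.2.2 u τ hc hm).surjOn hw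
  refine ⟨m, (hM.2.2.2.2.2 u τ hc hm).injOn (hφ u m hm') hx ?_⟩
  simpa only [map_smul] using hφw

end SquarefreePMod

/-- Lemma 2.2.  If `φ : N → M` is a degree-preserving
`R`-homomorphism between squarefree `P`-modules, then `ker φ`, `im φ` and
`coker φ` (with their induced gradings) are squarefree `P`-modules. -/
theorem ker_im_coker_squarefree
    (N M : Type) [AddCommGroup N] [AddCommGroup M]
    [Module (MvPolynomial (Phat P) K) N] [Module K N]
    [IsScalarTower K (MvPolynomial (Phat P) K) N]
    [Module (MvPolynomial (Phat P) K) M] [Module K M]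
    [IsScalarTower K (MvPolynomial (Phat P) K) M]
    (πN : (Phat P →₀ ℕ) → Submodule K N) (πM : (Phat P →₀ ℕ) → Submodule K M)
    (hN : IsSquarefreePMod (K := K) N πN) (hM : IsSquarefreePMod (K := K) M πM)
    (φ : N →ₗ[MvPolynomial (Phat P) K] M)
    (hdeg : ∀ u, ∀ x ∈ πN u, φ x ∈ πM u) :
    IsSquarefreePMod (K := K) ↥(LinearMap.ker φ)
      (fun u => ((πN u).comap ((LinearMap.ker φ).restrictScalars K).subtype :
        Submodule K ↥(LinearMap.ker φ))) ∧
    IsSquarefreePMod (K := K) ↥(LinearMap.range φ)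
      (fun u => ((πM u).comap ((LinearMap.range φ).restrictScalars K).subtype :
        Submodule K ↥(LinearMap.range φ))) ∧
    IsSquarefreePMod (K := K) (M ⧸ LinearMap.range φ)
      (fun u => (πM u).map ((LinearMap.range φ).mkQ.restrictScalars K)) := by
  let _ := hN.1.chooseDecomposition
  let _ := hM.1.chooseDecomposition
  -- `ker φ` is finitely generated because `R` is Noetherian, `P` being finite.
  have : Module.Finite (MvPolynomial (Phat P) K) N := hN.2.1
  have hrange := φ.isHomogeneous_range hdeg
  have hsat := isSmulSaturated_range hN hM φ hdeg
  exact ⟨hN.submodule _ (isInternal_comap_subtype_of_isHomogeneous (φ.isHomogeneous_ker hdeg))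
      (isSmulSaturated_ker hM φ hdeg),
    hM.submodule _ (isInternal_comap_subtype_of_isHomogeneous hrange) hsat,
    hM.quotient _ (isInternal_map_mkQ_of_isHomogeneous hrange) hsat⟩
end
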